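/- If Y ⊆ Y' are non-empty closed convex bounded subsets of a complete CAT(0) space with circumradii r, r' and circumcenters c, c', then d(c,c')^2 ≤ 2(r'^2 − r^2). -/

import Mathlib

/-- A complete CAT(0) structure on a metric space, given by a midpoint map
satisfying the Bruhat–Tits inequality. -/
structure CatZero (X : Type*) [MetricSpace X] where
  mid : X → X → X
  dist_left : ∀ y z, dist (mid y z) y = dist y z / 2
  dist_right : ∀ y z, dist (mid y z) z = dist y z / 2
  bruhat_tits : ∀ x y z, dist x (mid y z) ^ 2 ≤
    (dist x y ^ 2 + dist x z ^ 2) / 2 - dist y z ^ 2 / 4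

/-- The circumradius of a subset of a metric space. -/
noncomputable def circumradius {X : Type*} [MetricSpace X] (Y : Set X) : ℝ :=
  sInf {r : ℝ | 0 ≤ r ∧ ∃ x : X, Y ⊆ Metric.closedBall x r}

/-!
The midpoint `m` of the two circumcenters `z, z'` is, by the Bruhat–Tits inequality, at squared
distance at most `(r ^ 2 + r' ^ 2) / 2 - d(z, z') ^ 2 / 4` from every point of `Y ⊆ Y'`.
Hence `Y` lies in a ball about `m` of that squared radius, which is therefore at least `r ^ 2`.
-/

section Circumradius

variable {X : Type*} [MetricSpace X]

theorem circumradius_nonneg (Y : Set X) : 0 ≤ circumradius Y :=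
  Real.sInf_nonneg fun _ hρ => hρ.1

theorem circumradius_le_of_subset_closedBall {Y : Set X} {x : X} {ρ : ℝ} (hρ : 0 ≤ ρ)
    (hY : Y ⊆ Metric.closedBall x ρ) : circumradius Y ≤ ρ :=
  csInf_le ⟨0, fun _ h => h.1⟩ ⟨hρ, x, hY⟩

theorem circumradius_sq_le_of_forall_dist_sq_le {Y : Set X} (hY : Y.Nonempty) {x : X} {e : ℝ}
    (he : ∀ y ∈ Y, dist y x ^ 2 ≤ e) : circumradius Y ^ 2 ≤ e := by
  obtain ⟨y₀, hy₀⟩ := hY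
  have he0 : 0 ≤ e := (sq_nonneg _).trans (he y₀ hy₀)
  have hball : Y ⊆ Metric.closedBall x (Real.sqrt e) := fun y hy =>
    Real.le_sqrt_of_sq_le (he y hy)
  have hle := circumradius_le_of_subset_closedBall (Real.sqrt_nonneg e) hball
  calc circumradius Y ^ 2 ≤ Real.sqrt e ^ 2 := by gcongr; exact circumradius_nonneg Y
    _ = e := Real.sq_sqrt he0

end Circumradius

theorem CatZero.dist_mid_sq_le {X : Type*} [MetricSpace X] (c : CatZero X) {x y z : X}
    {a b : ℝ} (hy : dist x y ≤ a) (hz : dist x z ≤ b) :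
    dist x (c.mid y z) ^ 2 ≤ (a ^ 2 + b ^ 2) / 2 - dist y z ^ 2 / 4 := by
  have hy2 : dist x y ^ 2 ≤ a ^ 2 := pow_le_pow_left₀ dist_nonneg hy 2
  have hz2 : dist x z ^ 2 ≤ b ^ 2 := pow_le_pow_left₀ dist_nonneg hz 2
  linarith [c.bruhat_tits x y z]

theorem stmt2_general {X : Type*} [MetricSpace X] (c : CatZero X)
    (Y Y' : Set X)
    (hne : Y.Nonempty)
    (hsub : Y ⊆ Y')
    (z z' : X)
    (hz : Y ⊆ Metric.closedBall z (circumradius Y))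
    (hz' : Y' ⊆ Metric.closedBall z' (circumradius Y')) :
    dist z z' ^ 2 ≤ 2 * (circumradius Y' ^ 2 - circumradius Y ^ 2) := by
  have hmid : ∀ y ∈ Y, dist y (c.mid z z') ^ 2 ≤
      (circumradius Y ^ 2 + circumradius Y' ^ 2) / 2 - dist z z' ^ 2 / 4 :=
    fun y hy => c.dist_mid_sq_le (hz hy) (hz' (hsub hy))
  have := circumradius_sq_le_of_forall_dist_sq_le hne hmid
  linarith

/-- If `Y ⊆ Y'` are non-empty closed convex bounded subsets of a complete CAT(0)
space with circumradii `r, r'` and circumcenters `c, c'`, then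
`dist c c' ^ 2 ≤ 2 * (r'^2 - r^2)`. -/
theorem stmt2 {X : Type*} [MetricSpace X] [CompleteSpace X] (c : CatZero X)
    (Y Y' : Set X)
    (hne : Y.Nonempty) (hcl : IsClosed Y)
    (hconv : ∀ y ∈ Y, ∀ z ∈ Y, c.mid y z ∈ Y)
    (hbd : Bornology.IsBounded Y)
    (hne' : Y'.Nonempty) (hcl' : IsClosed Y')
    (hconv' : ∀ y ∈ Y', ∀ z ∈ Y', c.mid y z ∈ Y')
    (hbd' : Bornology.IsBounded Y')
    (hsub : Y ⊆ Y')
    (z z' : X)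
    (hz : Y ⊆ Metric.closedBall z (circumradius Y))
    (hz' : Y' ⊆ Metric.closedBall z' (circumradius Y')) :
    dist z z' ^ 2 ≤ 2 * (circumradius Y' ^ 2 - circumradius Y ^ 2) :=
  stmt2_general c Y Y' hne hsub z z' hz hz'
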